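/- arXiv:2605.08749 — 3 statements merged into one kernel-verified Lean document; each statement's English description precedes it below -/
import Mathlib

section
/- Let d ≥ 2. The pushforward of N(0, I_d) under the map x ↦ (x/‖x‖, ‖x‖²) from ℝ^d \ {0} to S^{d−1} × (0,∞) equals the product measure σ_{d−1} ⊗ χ²_d; in particular, for X ~ N(0, I_d), the direction X/‖X‖ is uniform on S^{d−1}, the squared norm ‖X‖² has the chi-squared distribution with d degrees of freedom, and they are independent. -/
open MeasureTheory ProbabilityTheory Real
open scoped RealInnerProductSpace ENNReal

noncomputable section

/-- The standard Gaussian measure `N(0, I_d)` on `ℝ^d`, defined by its density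
`(2π)^(-d/2) exp(-‖x‖²/2)` with respect to Lebesgue measure. -/
def stdGaussian (d : ℕ) : Measure (EuclideanSpace ℝ (Fin d)) :=
  volume.withDensity fun x => ENNReal.ofReal ((2 * π) ^ (-(d : ℝ) / 2) * Real.exp (-‖x‖ ^ 2 / 2))

/-- The uniform (normalized surface) probability measure on the unit sphere `S^{d-1}`,
viewed as a measure on the ambient space `ℝ^d`. -/
def sphereUniform (d : ℕ) : Measure (EuclideanSpace ℝ (Fin d)) :=
  Measure.map Subtype.val
    ((((volume : Measure (EuclideanSpace ℝ (Fin d))).toSphere) Set.univ)⁻¹ •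
      ((volume : Measure (EuclideanSpace ℝ (Fin d))).toSphere))

/-- The chi-squared distribution with `d` degrees of freedom, i.e. the Gamma distribution
with shape `d/2` and rate `1/2`. -/
def chiSqMeasure (d : ℕ) : Measure ℝ := gammaMeasure ((d : ℝ) / 2) (1 / 2)

/-- The CDF of the chi-squared distribution with `d` degrees of freedom. -/
def chiSqCDF (d : ℕ) (s : ℝ) : ℝ := cdf (gammaMeasure ((d : ℝ) / 2) (1 / 2)) s

/-- Lebesgue measure restricted to `[0,1]`, i.e. `Unif[0,1]`. -/
def unifI : Measure ℝ := volume.restrict (Set.Icc 0 1)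

/-- The wristband map `Φ(x) = (x/‖x‖, F_{χ²_d}(‖x‖²))`. -/
def wristband (d : ℕ) (x : EuclideanSpace ℝ (Fin d)) : EuclideanSpace ℝ (Fin d) × ℝ :=
  (‖x‖⁻¹ • x, chiSqCDF d (‖x‖ ^ 2))

section AuxLemmas
open Set

lemma aux_comap_val_withDensity {α : Type*} [MeasurableSpace α] (μ : Measure α) {s : Set α}
    (hs : MeasurableSet s) {f : α → ℝ≥0∞} (hf : Measurable f) :
    (μ.withDensity f).comap (Subtype.val : s → α)
      = (μ.comap Subtype.val).withDensity (fun x => f x) := by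
  ext t ht
  rw [comap_subtype_coe_apply hs, withDensity_apply _ ht,
    withDensity_apply _ ((MeasurableEmbedding.subtype_coe hs).measurableSet_image' ht),
    setLIntegral_subtype hs t f]

lemma aux_map_equiv_withDensity {α β : Type*} [MeasurableSpace α] [MeasurableSpace β]
    (e : α ≃ᵐ β) (μ : Measure α) {f : β → ℝ≥0∞} (hf : Measurable f) :
    Measure.map e (μ.withDensity (fun x => f (e x))) = (Measure.map e μ).withDensity f := by
  ext t ht
  rw [Measure.map_apply e.measurable ht, withDensity_apply _ (e.measurable ht),
    withDensity_apply _ ht, setLIntegral_map ht hf e.measurable]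

lemma aux_prod_withDensity_snd {α β : Type*} [MeasurableSpace α] [MeasurableSpace β]
    (μ : Measure α) (ν : Measure β) [SigmaFinite μ] [SigmaFinite ν] {f : β → ℝ≥0∞}
    (hf : Measurable f) [SigmaFinite (ν.withDensity f)] :
    (μ.prod ν).withDensity (fun p => f p.2) = μ.prod (ν.withDensity f) := by
  refine (Measure.prod_eq fun s t hs ht => ?_).symm
  rw [withDensity_apply _ (hs.prod ht), ← Measure.prod_restrict,
    lintegral_prod (fun p => f p.2) ((hf.comp measurable_snd).aemeasurable)]
  simp only [lintegral_const, Measure.restrict_apply MeasurableSet.univ, Set.univ_inter]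
  rw [withDensity_apply _ ht]
  ring

lemma aux_smul_prod {α β : Type*} [MeasurableSpace α] [MeasurableSpace β]
    (c : ℝ≥0∞) (μ : Measure α) (ν : Measure β) [SFinite ν] [SFinite (c • ν)] :
    (c • μ).prod ν = μ.prod (c • ν) := by
  ext s hs
  rw [Measure.prod_apply hs, Measure.prod_apply hs, lintegral_smul_measure]
  simp only [Measure.smul_apply, smul_eq_mul]
  rw [lintegral_const_mul _ (measurable_measure_prodMk_left hs)]

lemma aux_real_id (d : ℕ) (hd : 2 ≤ d) {x : ℝ} (hx : 0 < x) :
    (d : ℝ) * (Real.sqrt π ^ d / Real.Gamma ((d:ℝ)/2 + 1)) *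
        (x ^ (d-1) * ((2*π) ^ (-(d:ℝ)/2) * Real.exp (-x^2/2)))
      = |2*x| * ((1/2:ℝ) ^ ((d:ℝ)/2) / Real.Gamma ((d:ℝ)/2) * (x^2) ^ ((d:ℝ)/2 - 1) *
          Real.exp (-(1/2 * x^2))) := by
  have hd0 : (0:ℝ) < (d:ℝ) := by positivity
  have hG : 0 < Real.Gamma ((d:ℝ)/2) := Real.Gamma_pos_of_pos (by positivity)
  have hP : (0:ℝ) < π ^ ((d:ℝ)/2) := Real.rpow_pos_of_pos pi_pos _
  have h2 : |2*x| = 2*x := abs_of_pos (by linarith)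
  have hexp : (-(1/2 * x^2) : ℝ) = -x^2/2 := by ring
  have hΓ : Real.Gamma ((d:ℝ)/2+1) = ((d:ℝ)/2) * Real.Gamma ((d:ℝ)/2) :=
    Real.Gamma_add_one (by positivity)
  have hsqrt : Real.sqrt π ^ d = π ^ ((d:ℝ)/2) := by
    rw [Real.sqrt_eq_rpow, ← Real.rpow_natCast (π ^ ((1:ℝ)/2)) d, ← Real.rpow_mul pi_pos.le]
    norm_num
    rw [mul_comm, mul_one_div]
  have hc : (2*π:ℝ) ^ (-(d:ℝ)/2) = 2 ^ (-(d:ℝ)/2) * π ^ (-(d:ℝ)/2) :=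
    Real.mul_rpow (by norm_num) pi_pos.le
  have hhalf : (1/2:ℝ) ^ ((d:ℝ)/2) = 2 ^ (-(d:ℝ)/2) := by
    rw [one_div, Real.inv_rpow (by norm_num), ← Real.rpow_neg (by norm_num), neg_div]
  have hx2 : (x^2) ^ ((d:ℝ)/2 - 1) = x ^ ((d:ℝ) - 2) := by
    rw [← Real.rpow_natCast x 2, ← Real.rpow_mul hx.le]
    congr 1
    push_cast
    ring
  have hxd : (x:ℝ) ^ (d-1) = x * x ^ ((d:ℝ)-2) := by
    rw [← Real.rpow_natCast x (d-1)]
    have h1 : ((d - 1 : ℕ) : ℝ) = 1 + ((d:ℝ) - 2) := by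
      rw [Nat.cast_sub (by omega)]; push_cast; ring
    rw [h1, Real.rpow_add hx, Real.rpow_one]
  have hπneg : π ^ (-(d:ℝ)/2) = (π ^ ((d:ℝ)/2))⁻¹ := by
    rw [neg_div, Real.rpow_neg pi_pos.le]
  rw [h2, hexp, hΓ, hsqrt, hc, hhalf, hx2, hxd, hπneg]
  field_simp

lemma aux_radial (d : ℕ) (hd : 2 ≤ d) :
    (((volume : Measure (EuclideanSpace ℝ (Fin d))).toSphere) Set.univ) •
      Measure.map (fun r : Set.Ioi (0:ℝ) => (r:ℝ)^2)
        ((MeasureTheory.Measure.volumeIoiPow (d-1)).withDensity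
          (fun r : Set.Ioi (0:ℝ) => ENNReal.ofReal ((2*π) ^ (-(d:ℝ)/2) * Real.exp (-(r:ℝ)^2/2))))
      = gammaMeasure ((d : ℝ) / 2) (1 / 2) := by
  haveI : Nonempty (Fin d) := ⟨⟨0, by omega⟩⟩
  have hdim : Module.finrank ℝ (EuclideanSpace ℝ (Fin d)) = d := finrank_euclideanSpace_fin
  have hB : (0:ℝ) ≤ Real.sqrt π ^ d / Real.Gamma ((d:ℝ)/2 + 1) :=
    div_nonneg (by positivity) (Real.Gamma_pos_of_pos (by positivity)).le
  have hK : ((volume : Measure (EuclideanSpace ℝ (Fin d))).toSphere) Set.univ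
      = (d : ℝ≥0∞) * ENNReal.ofReal (Real.sqrt π ^ d / Real.Gamma ((d:ℝ)/2 + 1)) := by
    rw [Measure.toSphere_apply_univ, hdim, EuclideanSpace.volume_ball]
    simp [Fintype.card_fin]
  have hsq : Measurable (fun r : Set.Ioi (0:ℝ) => (r:ℝ)^2) :=
    measurable_subtype_coe.pow_const 2
  have hf2 : Measurable (fun x : ℝ => ENNReal.ofReal ((2*π) ^ (-(d:ℝ)/2) * Real.exp (-x^2/2))) := by
    fun_prop
  have hF : Measurable (fun x : ℝ =>
      ENNReal.ofReal (x ^ (d-1)) * ENNReal.ofReal ((2*π) ^ (-(d:ℝ)/2) * Real.exp (-x^2/2))) := by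
    fun_prop
  ext A hA
  have hpre : MeasurableSet ((fun r : Set.Ioi (0:ℝ) => (r:ℝ)^2) ⁻¹' A) := hsq hA
  -- LHS
  simp only [Measure.smul_apply, smul_eq_mul]
  rw [Measure.map_apply hsq hA, withDensity_apply _ hpre, Measure.volumeIoiPow,
    restrict_withDensity hpre, lintegral_withDensity_eq_lintegral_mul _
      ((measurable_subtype_coe.pow_const _).ennreal_ofReal) (by fun_prop :
        Measurable (fun r : Set.Ioi (0:ℝ) =>
          ENNReal.ofReal ((2*π) ^ (-(d:ℝ)/2) * Real.exp (-(r:ℝ)^2/2))))]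
  have hset : ∫⁻ (x : Set.Ioi (0:ℝ)) in (fun r : Set.Ioi (0:ℝ) => (r:ℝ)^2) ⁻¹' A,
        ((fun r : Set.Ioi (0:ℝ) => ENNReal.ofReal ((r:ℝ) ^ (d-1))) *
          fun r : Set.Ioi (0:ℝ) => ENNReal.ofReal ((2*π) ^ (-(d:ℝ)/2) * Real.exp (-(r:ℝ)^2/2)))
          x ∂(volume.comap Subtype.val)
      = ∫⁻ x in Subtype.val '' ((fun r : Set.Ioi (0:ℝ) => (r:ℝ)^2) ⁻¹' A),
          ENNReal.ofReal (x ^ (d-1)) *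
            ENNReal.ofReal ((2*π) ^ (-(d:ℝ)/2) * Real.exp (-x^2/2)) ∂volume := by
    rw [← setLIntegral_subtype measurableSet_Ioi _ (fun x : ℝ =>
      ENNReal.ofReal (x ^ (d-1)) * ENNReal.ofReal ((2*π) ^ (-(d:ℝ)/2) * Real.exp (-x^2/2)))]
    rfl
  rw [hset]
  have hSeq : Subtype.val '' ((fun r : Set.Ioi (0:ℝ) => (r:ℝ)^2) ⁻¹' A)
      = Set.Ioi (0:ℝ) ∩ (fun x : ℝ => x^2) ⁻¹' A := by
    ext x
    constructor
    · rintro ⟨⟨y, hy⟩, hmem, rfl⟩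
      exact ⟨hy, hmem⟩
    · rintro ⟨hx, hxA⟩
      exact ⟨⟨x, hx⟩, hxA, rfl⟩
  have hSmeas : MeasurableSet (Set.Ioi (0:ℝ) ∩ (fun x : ℝ => x^2) ⁻¹' A) :=
    measurableSet_Ioi.inter ((measurable_id.pow_const 2) hA)
  rw [hSeq]
  -- Gamma side
  rw [gammaMeasure, withDensity_apply _ hA,
    ← lintegral_inter_add_diff (gammaPDF ((d:ℝ)/2) (1/2)) A measurableSet_Ioi]
  have hzero : ∫⁻ x in A \ Set.Ioi 0, gammaPDF ((d:ℝ)/2) (1/2) x ∂volume = 0 := by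
    have hae : ∀ᵐ x : ℝ ∂volume, x ≠ 0 := by
      rw [ae_iff]
      simpa using measure_singleton (0:ℝ)
    rw [setLIntegral_congr_fun_ae (hA.diff measurableSet_Ioi)
      (g := fun _ => (0:ℝ≥0∞)) ?_, lintegral_zero]
    filter_upwards [hae] with x hx hmem
    have hxneg : x < 0 := lt_of_le_of_ne (not_lt.1 hmem.2) hx
    exact gammaPDF_of_neg hxneg
  rw [hzero, add_zero]
  -- change of variables
  have himg : A ∩ Set.Ioi (0:ℝ)
      = (fun x : ℝ => x^2) '' (Set.Ioi (0:ℝ) ∩ (fun x : ℝ => x^2) ⁻¹' A) := by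
    ext y
    constructor
    · rintro ⟨hyA, hy⟩
      exact ⟨Real.sqrt y, ⟨Real.sqrt_pos.2 hy, by
        simpa [Real.sq_sqrt (le_of_lt hy)] using hyA⟩, Real.sq_sqrt (le_of_lt hy)⟩
    · rintro ⟨x, ⟨hx, hxA⟩, rfl⟩
      exact ⟨hxA, Set.mem_Ioi.2 (pow_pos hx 2)⟩
  rw [himg, lintegral_image_eq_lintegral_abs_det_fderiv_mul volume hSmeas
    (f' := fun x => (1 : ℝ →L[ℝ] ℝ).smulRight (2*x)) ?_ ?_ (gammaPDF ((d:ℝ)/2) (1/2))]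
  rotate_left
  · intro x hx
    have h : HasDerivAt (fun y : ℝ => y^2) (2*x) x := by
      simpa using hasDerivAt_pow 2 x
    exact h.hasDerivWithinAt.hasFDerivWithinAt
  · intro a ha b hb h
    have ha' := ha.1
    have hb' := hb.1
    simp only [Set.mem_Ioi] at ha' hb'
    have h' : a^2 = b^2 := h
    nlinarith
  simp only [ContinuousLinearMap.det_smulRight, ContinuousLinearMap.one_apply, one_mul]
  rw [← lintegral_const_mul _ hF]
  refine setLIntegral_congr_fun_ae hSmeas (Filter.Eventually.of_forall fun x hx => ?_)
  have hxpos : (0:ℝ) < x := hx.1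
  rw [hK, gammaPDF_of_nonneg (by positivity)]
  rw [← ENNReal.ofReal_natCast d, ← ENNReal.ofReal_mul (by positivity),
    ← ENNReal.ofReal_mul (by positivity : (0:ℝ) ≤ x ^ (d-1)),
    ← ENNReal.ofReal_mul (by positivity), ← ENNReal.ofReal_mul (abs_nonneg _)]
  exact congrArg ENNReal.ofReal (aux_real_id d hd hxpos)

lemma aux_pushforward (d : ℕ) (hd : 2 ≤ d) :
    Measure.map (fun x : EuclideanSpace ℝ (Fin d) => (‖x‖⁻¹ • x, ‖x‖ ^ 2))
        (volume.withDensity fun x : EuclideanSpace ℝ (Fin d) =>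
          ENNReal.ofReal ((2 * π) ^ (-(d : ℝ) / 2) * Real.exp (-‖x‖ ^ 2 / 2)))
      = (Measure.map Subtype.val
            ((volume : Measure (EuclideanSpace ℝ (Fin d))).toSphere)).prod
          (Measure.map (fun r : Set.Ioi (0:ℝ) => (r:ℝ)^2)
            ((MeasureTheory.Measure.volumeIoiPow (d-1)).withDensity
              (fun r : Set.Ioi (0:ℝ) =>
                ENNReal.ofReal ((2*π) ^ (-(d:ℝ)/2) * Real.exp (-(r:ℝ)^2/2))))) := by
  haveI : Nonempty (Fin d) := ⟨⟨0, by omega⟩⟩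
  have hdim : Module.finrank ℝ (EuclideanSpace ℝ (Fin d)) = d := finrank_euclideanSpace_fin
  set ν := (volume.withDensity fun x : EuclideanSpace ℝ (Fin d) =>
    ENNReal.ofReal ((2 * π) ^ (-(d : ℝ) / 2) * Real.exp (-‖x‖ ^ 2 / 2))) with hνdef
  have hΦ : Measurable (fun x : EuclideanSpace ℝ (Fin d) => (‖x‖⁻¹ • x, ‖x‖^2)) :=
    ((measurable_norm.inv).smul measurable_id).prodMk (measurable_norm.pow_const 2)
  have hgd : Measurable (fun x : EuclideanSpace ℝ (Fin d) =>
      ENNReal.ofReal ((2*π) ^ (-(d:ℝ)/2) * Real.exp (-‖x‖^2/2))) := by fun_prop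
  have h0 : ν {0} = 0 := by
    rw [hνdef, withDensity_apply _ (measurableSet_singleton 0),
      Measure.restrict_eq_zero.2 (measure_singleton 0), lintegral_zero_measure]
  have hrest : ν.restrict {(0 : EuclideanSpace ℝ (Fin d))}ᶜ = ν := by
    conv_rhs => rw [← Measure.restrict_univ (μ := ν)]
    exact Measure.restrict_congr_set (by rw [ae_eq_univ, compl_compl]; exact h0)
  set e := (homeomorphUnitSphereProd (EuclideanSpace ℝ (Fin d))).toMeasurableEquiv with hedef
  set f2 : Metric.sphere (0 : EuclideanSpace ℝ (Fin d)) 1 × Set.Ioi (0:ℝ) → ℝ≥0∞ :=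
    fun p => ENNReal.ofReal ((2*π) ^ (-(d:ℝ)/2) * Real.exp (-(p.2:ℝ)^2/2)) with hf2def
  have hf2m : Measurable f2 := by rw [hf2def]; fun_prop
  have hsq : Measurable (fun r : Set.Ioi (0:ℝ) => (r:ℝ)^2) :=
    measurable_subtype_coe.pow_const 2
  have hG : Measurable (Prod.map (Subtype.val :
      Metric.sphere (0 : EuclideanSpace ℝ (Fin d)) 1 → EuclideanSpace ℝ (Fin d))
      (fun r : Set.Ioi (0:ℝ) => (r:ℝ)^2)) :=
    measurable_subtype_coe.prodMap hsq
  calc Measure.map (fun x : EuclideanSpace ℝ (Fin d) => (‖x‖⁻¹ • x, ‖x‖ ^ 2)) ν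
      = Measure.map (fun x : EuclideanSpace ℝ (Fin d) => (‖x‖⁻¹ • x, ‖x‖ ^ 2))
          (Measure.map Subtype.val
            (ν.comap (Subtype.val : ({(0 : EuclideanSpace ℝ (Fin d))}ᶜ : Set _) → _))) := by
        rw [map_comap_subtype_coe (measurableSet_singleton _).compl, hrest]
    _ = Measure.map ((fun x : EuclideanSpace ℝ (Fin d) => (‖x‖⁻¹ • x, ‖x‖ ^ 2)) ∘ Subtype.val)
          (ν.comap Subtype.val) := Measure.map_map hΦ measurable_subtype_coe
    _ = Measure.map (Prod.map Subtype.val (fun r : Set.Ioi (0:ℝ) => (r:ℝ)^2) ∘ e)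
          ((volume.comap Subtype.val).withDensity (fun x => f2 (e x))) := by
        rw [hνdef, aux_comap_val_withDensity volume (measurableSet_singleton _).compl hgd]
        congr 1
        · funext x
          simp [e, homeomorphUnitSphereProd, homeomorphSphereProd]
        · congr 1
          funext x
          simp [f2, e, homeomorphUnitSphereProd, homeomorphSphereProd]
    _ = Measure.map (Prod.map Subtype.val (fun r : Set.Ioi (0:ℝ) => (r:ℝ)^2))
          (Measure.map e ((volume.comap Subtype.val).withDensity (fun x => f2 (e x)))) :=
        (Measure.map_map hG e.measurable).symm
    _ = Measure.map (Prod.map Subtype.val (fun r : Set.Ioi (0:ℝ) => (r:ℝ)^2))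
          ((Measure.map e (volume.comap Subtype.val)).withDensity f2) := by
        rw [aux_map_equiv_withDensity e _ hf2m]
    _ = Measure.map (Prod.map Subtype.val (fun r : Set.Ioi (0:ℝ) => (r:ℝ)^2))
          (((volume : Measure (EuclideanSpace ℝ (Fin d))).toSphere.prod
            (Measure.volumeIoiPow (d-1))).withDensity f2) := by
        rw [hedef, Homeomorph.toMeasurableEquiv_coe,
          (volume : Measure (EuclideanSpace ℝ (Fin d))).measurePreserving_homeomorphUnitSphereProd.map_eq,
          hdim]
    _ = Measure.map (Prod.map Subtype.val (fun r : Set.Ioi (0:ℝ) => (r:ℝ)^2))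
          ((volume : Measure (EuclideanSpace ℝ (Fin d))).toSphere.prod
            ((Measure.volumeIoiPow (d-1)).withDensity
              (fun r : Set.Ioi (0:ℝ) =>
                ENNReal.ofReal ((2*π) ^ (-(d:ℝ)/2) * Real.exp (-(r:ℝ)^2/2))))) := by
        rw [hf2def]
        exact congrArg (Measure.map _) (aux_prod_withDensity_snd _ _
          (f := fun r : Set.Ioi (0:ℝ) =>
            ENNReal.ofReal ((2*π) ^ (-(d:ℝ)/2) * Real.exp (-(r:ℝ)^2/2))) (by fun_prop))
    _ = _ := (Measure.map_prod_map _ _ measurable_subtype_coe hsq).symm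

end AuxLemmas

/-- **Gaussian polar decomposition.** For `d ≥ 2`, the pushforward of `N(0, I_d)` under
`x ↦ (x/‖x‖, ‖x‖²)` is `σ_{d-1} ⊗ χ²_d`; in particular the direction is uniform on the
sphere, the squared norm is chi-squared with `d` degrees of freedom, and (as expressed by
the product structure) they are independent. -/
theorem gaussian_polar_decomposition (d : ℕ) (hd : 2 ≤ d) :
    Measure.map (fun x : EuclideanSpace ℝ (Fin d) => (‖x‖⁻¹ • x, ‖x‖ ^ 2)) (stdGaussian d)
      = (sphereUniform d).prod (chiSqMeasure d) ∧
    Measure.map (fun x : EuclideanSpace ℝ (Fin d) => ‖x‖⁻¹ • x) (stdGaussian d)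
      = sphereUniform d ∧
    Measure.map (fun x : EuclideanSpace ℝ (Fin d) => ‖x‖ ^ 2) (stdGaussian d)
      = chiSqMeasure d := by
  haveI : Nonempty (Fin d) := ⟨⟨0, by omega⟩⟩
  have hdim : Module.finrank ℝ (EuclideanSpace ℝ (Fin d)) = d := finrank_euclideanSpace_fin
  have hK0 : ((volume : Measure (EuclideanSpace ℝ (Fin d))).toSphere Set.univ) ≠ 0 := by
    rw [Measure.toSphere_apply_univ, hdim]
    exact mul_ne_zero (by exact_mod_cast (by omega : d ≠ 0))
      (Metric.measure_ball_pos _ _ one_pos).ne'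
  have hKtop : ((volume : Measure (EuclideanSpace ℝ (Fin d))).toSphere Set.univ) ≠ ∞ :=
    measure_ne_top _ _
  have hΦ : Measurable (fun x : EuclideanSpace ℝ (Fin d) => (‖x‖⁻¹ • x, ‖x‖^2)) :=
    ((measurable_norm.inv).smul measurable_id).prodMk (measurable_norm.pow_const 2)
  have hsq : Measurable (fun r : Set.Ioi (0:ℝ) => (r:ℝ)^2) :=
    measurable_subtype_coe.pow_const 2
  have hsphere : Measure.map (Subtype.val)
      ((volume : Measure (EuclideanSpace ℝ (Fin d))).toSphere)
      = ((volume : Measure (EuclideanSpace ℝ (Fin d))).toSphere Set.univ) • sphereUniform d := by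
    rw [sphereUniform, Measure.map_smul, smul_smul, ENNReal.mul_inv_cancel hK0 hKtop, one_smul]
  have hchi : ((volume : Measure (EuclideanSpace ℝ (Fin d))).toSphere Set.univ) •
      Measure.map (fun r : Set.Ioi (0:ℝ) => (r:ℝ)^2)
        ((MeasureTheory.Measure.volumeIoiPow (d-1)).withDensity
          (fun r : Set.Ioi (0:ℝ) =>
            ENNReal.ofReal ((2*π) ^ (-(d:ℝ)/2) * Real.exp (-(r:ℝ)^2/2))))
      = chiSqMeasure d := aux_radial d hd
  haveI hprobchi : IsProbabilityMeasure (chiSqMeasure d) :=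
    isProbabilityMeasure_gammaMeasure (by positivity) (by norm_num)
  have hMeq : Measure.map (fun r : Set.Ioi (0:ℝ) => (r:ℝ)^2)
        ((MeasureTheory.Measure.volumeIoiPow (d-1)).withDensity
          (fun r : Set.Ioi (0:ℝ) =>
            ENNReal.ofReal ((2*π) ^ (-(d:ℝ)/2) * Real.exp (-(r:ℝ)^2/2))))
      = ((volume : Measure (EuclideanSpace ℝ (Fin d))).toSphere Set.univ)⁻¹ •
          chiSqMeasure d := by
    rw [← hchi, smul_smul, ENNReal.inv_mul_cancel hK0 hKtop, one_smul]
  haveI hsf : SFinite (Measure.map (fun r : Set.Ioi (0:ℝ) => (r:ℝ)^2)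
      ((MeasureTheory.Measure.volumeIoiPow (d-1)).withDensity
        (fun r : Set.Ioi (0:ℝ) =>
          ENNReal.ofReal ((2*π) ^ (-(d:ℝ)/2) * Real.exp (-(r:ℝ)^2/2))))) := by
    rw [hMeq]; infer_instance
  haveI hsf2 : SFinite (((volume : Measure (EuclideanSpace ℝ (Fin d))).toSphere Set.univ) •
      Measure.map (fun r : Set.Ioi (0:ℝ) => (r:ℝ)^2)
        ((MeasureTheory.Measure.volumeIoiPow (d-1)).withDensity
          (fun r : Set.Ioi (0:ℝ) =>
            ENNReal.ofReal ((2*π) ^ (-(d:ℝ)/2) * Real.exp (-(r:ℝ)^2/2))))) := by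
    rw [hchi]; infer_instance
  have h1 : Measure.map (fun x : EuclideanSpace ℝ (Fin d) => (‖x‖⁻¹ • x, ‖x‖ ^ 2))
      (stdGaussian d) = (sphereUniform d).prod (chiSqMeasure d) := by
    rw [show stdGaussian d = (volume.withDensity fun x : EuclideanSpace ℝ (Fin d) =>
        ENNReal.ofReal ((2 * π) ^ (-(d : ℝ) / 2) * Real.exp (-‖x‖ ^ 2 / 2))) from rfl,
      aux_pushforward d hd, hsphere, aux_smul_prod, hchi]
  have hsu : sphereUniform d Set.univ = 1 := by
    rw [sphereUniform, Measure.map_apply measurable_subtype_coe MeasurableSet.univ,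
      Set.preimage_univ, Measure.smul_apply, smul_eq_mul, ENNReal.inv_mul_cancel hK0 hKtop]
  haveI : IsProbabilityMeasure (sphereUniform d) := ⟨hsu⟩
  refine ⟨h1, ?_, ?_⟩
  · have hcomp : (fun x : EuclideanSpace ℝ (Fin d) => ‖x‖⁻¹ • x)
        = Prod.fst ∘ (fun x : EuclideanSpace ℝ (Fin d) => (‖x‖⁻¹ • x, ‖x‖^2)) := rfl
    rw [hcomp, ← Measure.map_map measurable_fst hΦ, h1, Measure.map_fst_prod, measure_univ,
      one_smul]
  · have hcomp : (fun x : EuclideanSpace ℝ (Fin d) => ‖x‖ ^ 2)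
        = Prod.snd ∘ (fun x : EuclideanSpace ℝ (Fin d) => (‖x‖⁻¹ • x, ‖x‖^2)) := rfl
    rw [hcomp, ← Measure.map_map measurable_snd hΦ, h1, Measure.map_snd_prod, measure_univ,
      one_smul]
end
end

section
/- Let β > 0. For all t, t' ∈ [0,1], the infinite-image Neumann radial kernel admits the absolutely convergent cosine expansion k_rad(t,t') = Σ_{k=0}^∞ a_k cos(kπt) cos(kπt'), where a_0 = √(π/β) and a_k = 2√(π/β) exp(−π²k²/(4β)) for k ≥ 1. -/
open MeasureTheory ProbabilityTheory Real
open scoped RealInnerProductSpace ENNReal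

noncomputable section

/-- The infinite-image Neumann radial kernel
`k_rad(t,t') = Σ_{m∈ℤ} exp(-β(t-t'-2m)²) + Σ_{m∈ℤ} exp(-β(t+t'-2m)²)`. -/
def kRad (β : ℝ) (t t' : ℝ) : ℝ :=
  (∑' m : ℤ, Real.exp (-β * (t - t' - 2 * m) ^ 2)) +
    (∑' m : ℤ, Real.exp (-β * (t + t' - 2 * m) ^ 2))

/-- The Neumann cosine coefficients `a_0 = √(π/β)`, `a_k = 2√(π/β) exp(-π²k²/(4β))` for `k ≥ 1`. -/
def aCoeff (β : ℝ) (k : ℕ) : ℝ :=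
  if k = 0 then Real.sqrt (π / β)
  else 2 * Real.sqrt (π / β) * Real.exp (-(π ^ 2 * (k : ℝ) ^ 2) / (4 * β))

section AuxNK
open Complex in

lemma auxSumexpNK (d r : ℝ) (hd : 0 < d) :
    Summable fun n : ℤ => Real.exp (-d * n ^ 2 + r * n) := by
  have hπ := Real.pi_pos
  have h : Summable fun n : ℤ =>
      jacobiTheta₂_term n (Complex.I * ((-(r / (2 * π)) : ℝ) : ℂ)) (Complex.I * ((d / π : ℝ) : ℂ)) := by
    rw [summable_jacobiTheta₂_term_iff]
    simp [Complex.mul_im]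
    positivity
  refine h.norm.congr fun n => ?_
  rw [norm_jacobiTheta₂_term]
  have h1 : (Complex.I * ((d / π : ℝ) : ℂ)).im = d / π := by
    simp only [Complex.mul_im, Complex.I_re, Complex.I_im, Complex.ofReal_re, Complex.ofReal_im,
      zero_mul, one_mul, zero_add]
  have h2 : (Complex.I * ((-(r / (2 * π)) : ℝ) : ℂ)).im = -(r / (2 * π)) := by
    simp only [Complex.mul_im, Complex.I_re, Complex.I_im, Complex.ofReal_re, Complex.ofReal_im,
      zero_mul, one_mul, zero_add]
  rw [h1, h2]
  congr 1
  field_simp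
  ring

lemma auxThetaNK {c : ℝ} (hc : 0 < c) (x : ℝ) :
    (∑' m : ℤ, Real.exp (-c * (x - 2 * m) ^ 2)) =
      Real.sqrt (π / c) / 2 *
        ∑' n : ℤ, Real.exp (-(π ^ 2 * (n : ℝ) ^ 2) / (4 * c)) * Real.cos ((n : ℝ) * π * x) := by
  have hπ := Real.pi_pos
  have hπ' : (π : ℂ) ≠ 0 := Complex.ofReal_ne_zero.mpr hπ.ne'
  have hc' : (c : ℂ) ≠ 0 := Complex.ofReal_ne_zero.mpr hc.ne'
  set a : ℂ := ((4 * c / π : ℝ) : ℂ) with ha_def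
  set b : ℂ := ((2 * c * x / π : ℝ) : ℂ) with hb_def
  have ha0 : a ≠ 0 := by
    rw [ha_def]; push_cast; exact div_ne_zero (mul_ne_zero (by norm_num) hc') hπ'
  have ha : 0 < a.re := by
    rw [ha_def, Complex.ofReal_re]; positivity
  have key := Complex.tsum_exp_neg_quadratic ha b
  have hL : (∑' n : ℤ, Complex.exp (-π * a * n ^ 2 + 2 * π * b * n)) =
      Complex.exp ((c : ℂ) * x ^ 2) * ((∑' m : ℤ, Real.exp (-c * (x - 2 * m) ^ 2) : ℝ) : ℂ) := by
    rw [Complex.ofReal_tsum, ← tsum_mul_left]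
    refine tsum_congr fun m => ?_
    rw [Complex.ofReal_exp, ← Complex.exp_add]
    congr 1
    rw [ha_def, hb_def]
    push_cast
    field_simp
    ring
  have hR : (∑' n : ℤ, Complex.exp (-π / a * (n + Complex.I * b) ^ 2)) =
      Complex.exp ((c : ℂ) * x ^ 2) *
        ∑' n : ℤ, Complex.exp (((-(π ^ 2 * (n : ℝ) ^ 2) / (4 * c) : ℝ) : ℂ)
          - Complex.I * (((n : ℝ) * π * x : ℝ) : ℂ)) := by
    rw [← tsum_mul_left]
    refine tsum_congr fun n => ?_
    rw [← Complex.exp_add]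
    congr 1
    rw [ha_def, hb_def]
    have hI : Complex.I ^ 2 = -1 := Complex.I_sq
    push_cast
    field_simp
    ring_nf
    rw [hI]
    ring
  rw [hL, hR] at key
  have key2 : ((∑' m : ℤ, Real.exp (-c * (x - 2 * m) ^ 2) : ℝ) : ℂ) =
      1 / a ^ (1 / 2 : ℂ) *
        ∑' n : ℤ, Complex.exp (((-(π ^ 2 * (n : ℝ) ^ 2) / (4 * c) : ℝ) : ℂ)
          - Complex.I * (((n : ℝ) * π * x : ℝ) : ℂ)) := by
    apply mul_left_cancel₀ (Complex.exp_ne_zero ((c : ℂ) * x ^ 2))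
    rw [key]; ring
  have hpow : a ^ (1 / 2 : ℂ) = ((Real.sqrt (4 * c / π) : ℝ) : ℂ) := by
    rw [ha_def, Real.sqrt_eq_rpow, Complex.ofReal_cpow (by positivity)]
    norm_num
  have hsq4 : Real.sqrt (4 * c / π) = 2 / Real.sqrt (π / c) := by
    rw [show (4 * c / π : ℝ) = 4 / (π / c) by field_simp,
      Real.sqrt_div (by norm_num : (0:ℝ) ≤ 4),
      show Real.sqrt 4 = 2 by
        rw [show (4:ℝ) = 2 ^ 2 by norm_num, Real.sqrt_sq (by norm_num : (0:ℝ) ≤ 2)]]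
  have hre : ∀ (u v : ℝ), ((u:ℂ) - Complex.I * (v:ℂ)).re = u := by intros; simp
  have him : ∀ (u v : ℝ), ((u:ℂ) - Complex.I * (v:ℂ)).im = -v := by intros; simp
  have hsum : Summable fun n : ℤ =>
      Complex.exp (((-(π ^ 2 * (n : ℝ) ^ 2) / (4 * c) : ℝ) : ℂ)
        - Complex.I * (((n : ℝ) * π * x : ℝ) : ℂ)) := by
    apply Summable.of_norm
    have base := auxSumexpNK (π ^ 2 / (4 * c)) 0 (by positivity)
    refine base.congr fun n => ?_
    rw [Complex.norm_exp, hre]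
    ring_nf
  rw [hpow, hsq4] at key2
  have := congrArg Complex.re key2
  rw [Complex.ofReal_re] at this
  rw [this]
  rw [show ((1 : ℂ) / ((2 / Real.sqrt (π / c) : ℝ) : ℂ)) = (((Real.sqrt (π / c) / 2 : ℝ)) : ℂ) by
    push_cast; rw [one_div_div]]
  rw [Complex.re_ofReal_mul]
  congr 1
  rw [Complex.re_tsum hsum]
  refine tsum_congr fun n => ?_
  rw [Complex.exp_re, hre, him, Real.cos_neg]

theorem auxKRadTestNK (β : ℝ) (hβ : 0 < β) (t t' : ℝ) :
    (Summable fun k : ℕ => |(if k = 0 then Real.sqrt (π / β)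
        else 2 * Real.sqrt (π / β) * Real.exp (-(π ^ 2 * (k : ℝ) ^ 2) / (4 * β)))
        * Real.cos (k * π * t) * Real.cos (k * π * t')|) ∧
      ((∑' m : ℤ, Real.exp (-β * (t - t' - 2 * m) ^ 2)) +
        (∑' m : ℤ, Real.exp (-β * (t + t' - 2 * m) ^ 2)))
        = ∑' k : ℕ, (if k = 0 then Real.sqrt (π / β)
            else 2 * Real.sqrt (π / β) * Real.exp (-(π ^ 2 * (k : ℝ) ^ 2) / (4 * β)))
            * Real.cos (k * π * t) * Real.cos (k * π * t') := by
  have hπ := Real.pi_pos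
  set S : ℝ := Real.sqrt (π / β) with hS_def
  have hS : 0 ≤ S := Real.sqrt_nonneg _
  set e : ℤ → ℝ := fun n => Real.exp (-(π ^ 2 * (n : ℝ) ^ 2) / (4 * β)) with he_def
  set F : ℤ → ℝ := fun n =>
    e n * (Real.cos ((n : ℝ) * π * t) * Real.cos ((n : ℝ) * π * t')) with hF_def
  set G : ℕ → ℝ := fun k => (if k = 0 then S else 2 * S * Real.exp (-(π ^ 2 * (k : ℝ) ^ 2) / (4 * β)))
    * Real.cos (k * π * t) * Real.cos (k * π * t') with hG_def
  have base : Summable e := by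
    refine (auxSumexpNK (π ^ 2 / (4 * β)) 0 (by positivity)).congr fun n => ?_
    rw [he_def]; congr 1; ring
  have hsum_cos : ∀ y : ℝ, Summable fun n : ℤ => e n * Real.cos ((n : ℝ) * π * y) := by
    intro y
    refine Summable.of_norm_bounded base fun n => ?_
    rw [Real.norm_eq_abs, abs_mul, Real.abs_exp]
    exact mul_le_of_le_one_right (Real.exp_pos _).le (Real.abs_cos_le_one _)
  have hF : Summable F := by
    refine Summable.of_norm_bounded base fun n => ?_
    rw [hF_def, Real.norm_eq_abs, abs_mul, Real.abs_exp, abs_mul]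
    refine mul_le_of_le_one_right (Real.exp_pos _).le ?_
    exact mul_le_one₀ (Real.abs_cos_le_one _) (abs_nonneg _) (Real.abs_cos_le_one _)
  have hbound : ∀ k : ℕ, |G k| ≤ 2 * S * e (k : ℤ) := by
    intro k
    have h1 : |(if k = 0 then S else 2 * S * Real.exp (-(π ^ 2 * (k : ℝ) ^ 2) / (4 * β)))|
        ≤ 2 * S * e (k : ℤ) := by
      have he1 : e (k : ℤ) = Real.exp (-(π ^ 2 * (k : ℝ) ^ 2) / (4 * β)) := by
        rw [he_def]; push_cast; ring_nf
      by_cases hk : k = 0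
      · subst hk
        have h0 : Real.exp (-(π ^ 2 * ((0:ℕ) : ℝ) ^ 2) / (4 * β)) = 1 := by norm_num
        rw [he1, if_pos rfl, h0, _root_.abs_of_nonneg hS]
        linarith
      · rw [if_neg hk, he1, _root_.abs_of_nonneg (by positivity)]
    calc |G k| = |(if k = 0 then S else 2 * S * Real.exp (-(π ^ 2 * (k : ℝ) ^ 2) / (4 * β)))|
        * |Real.cos (k * π * t)| * |Real.cos (k * π * t')| := by
          rw [hG_def, abs_mul, abs_mul]
      _ ≤ |(if k = 0 then S else 2 * S * Real.exp (-(π ^ 2 * (k : ℝ) ^ 2) / (4 * β)))| * 1 * 1 := by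
          gcongr <;> first | exact abs_nonneg _ | exact Real.abs_cos_le_one _
      _ = _ := by rw [mul_one, mul_one]
      _ ≤ 2 * S * e (k : ℤ) := h1
  have basen : Summable fun k : ℕ => e (k : ℤ) := base.comp_injective Nat.cast_injective
  have hGabs : Summable fun k : ℕ => |G k| :=
    Summable.of_nonneg_of_le (fun k => abs_nonneg _) hbound (basen.mul_left (2 * S))
  have hG : Summable G := hGabs.of_abs
  refine ⟨hGabs, ?_⟩
  rw [auxThetaNK hβ (t - t'), auxThetaNK hβ (t + t'), ← mul_add]
  have hcomb : ((∑' n : ℤ, e n * Real.cos ((n:ℝ) * π * (t - t'))) +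
      ∑' n : ℤ, e n * Real.cos ((n:ℝ) * π * (t + t'))) = 2 * ∑' n : ℤ, F n := by
    rw [← Summable.tsum_add (hsum_cos (t - t')) (hsum_cos (t + t')), ← tsum_mul_left]
    refine tsum_congr fun n => ?_
    rw [hF_def]
    have : Real.cos ((n:ℝ) * π * (t - t')) + Real.cos ((n:ℝ) * π * (t + t')) =
        2 * (Real.cos ((n:ℝ) * π * t) * Real.cos ((n:ℝ) * π * t')) := by
      rw [show (n:ℝ) * π * (t - t') = (n:ℝ) * π * t - (n:ℝ) * π * t' by ring,
        show (n:ℝ) * π * (t + t') = (n:ℝ) * π * t + (n:ℝ) * π * t' by ring,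
        Real.cos_sub, Real.cos_add]
      ring
    rw [← mul_add, this]; ring
  rw [hcomb]
  -- split the ℤ-sum
  have hFnat : Summable fun k : ℕ => F (k : ℤ) := hF.comp_injective Nat.cast_injective
  have hFneg : Summable fun k : ℕ => F (-((k : ℤ) + 1)) :=
    hF.comp_injective fun a b hab => by omega
  have heven : ∀ k : ℕ, F (-((k : ℤ) + 1)) = F ((k : ℤ) + 1) := by
    intro k
    simp only [hF_def, he_def]
    push_cast
    rw [show (-((k:ℝ) + 1)) ^ 2 = ((k:ℝ) + 1) ^ 2 by ring,
      show -((k:ℝ) + 1) * π * t = -(((k:ℝ) + 1) * π * t) by ring,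
      show -((k:ℝ) + 1) * π * t' = -(((k:ℝ) + 1) * π * t') by ring,
      Real.cos_neg, Real.cos_neg]
  have hsplit : ∑' n : ℤ, F n = F 0 + 2 * ∑' k : ℕ, F ((k : ℤ) + 1) := by
    rw [tsum_of_nat_of_neg_add_one hFnat hFneg, Summable.tsum_eq_zero_add hFnat]
    rw [tsum_congr heven]
    push_cast
    ring
  rw [hsplit]
  have hF0 : F 0 = 1 := by simp [hF_def, he_def]
  have hterm : ∀ k : ℕ, G (k + 1) = 2 * S * F ((k : ℤ) + 1) := by
    intro k
    simp only [hG_def, hF_def, he_def, Nat.succ_ne_zero, if_false]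
    push_cast
    ring
  rw [Summable.tsum_eq_zero_add hG, hF0]
  have hstep : ∑' k : ℕ, G (k + 1) = 2 * S * ∑' k : ℕ, F ((k : ℤ) + 1) := by
    rw [← tsum_mul_left]; exact tsum_congr hterm
  have hG0 : G 0 = S := by norm_num [hG_def]
  rw [hstep, hG0]
  ring

end AuxNK

/-- **Neumann cosine expansion.** For `β > 0` and `t, t' ∈ [0,1]`, the infinite-image Neumann
radial kernel admits the absolutely convergent expansion
`k_rad(t,t') = Σ_{k=0}^∞ a_k cos(kπt) cos(kπt')`. -/
theorem kRad_cosine_expansion (β : ℝ) (hβ : 0 < β) (t t' : ℝ)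
    (ht : t ∈ Set.Icc (0 : ℝ) 1) (ht' : t' ∈ Set.Icc (0 : ℝ) 1) :
    (Summable fun k : ℕ => |aCoeff β k * Real.cos (k * π * t) * Real.cos (k * π * t')|) ∧
      kRad β t t' = ∑' k : ℕ, aCoeff β k * Real.cos (k * π * t) * Real.cos (k * π * t') := by
  rw [kRad]
  simp only [aCoeff]
  exact auxKRadTestNK β hβ t t'
end
end

section
/- Let β > 0. Then ∫₀¹ ∫₀¹ k_rad(t,t') dt dt' = √(π/β); that is, the energy of the uniform distribution on [0,1] under the infinite-image Neumann radial kernel equals the constant-mode coefficient a_0 = √(π/β). -/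
open MeasureTheory ProbabilityTheory Real
open scoped RealInnerProductSpace ENNReal

noncomputable section

lemma summable_gauss_nat {β : ℝ} (hβ : 0 < β) (a : ℝ) :
    Summable (fun n : ℕ => Real.exp (-β * (a - 2 * n) ^ 2)) := by
  apply summable_of_isBigO_nat Real.summable_exp_neg_nat
  rw [Asymptotics.isBigO_iff]
  refine ⟨1, ?_⟩
  have h1 : ∀ᶠ n : ℕ in Filter.atTop, |a| ≤ (n : ℝ) :=
    tendsto_natCast_atTop_atTop.eventually_ge_atTop |a|
  have h2 : ∀ᶠ n : ℕ in Filter.atTop, 1 / β ≤ (n : ℝ) :=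
    tendsto_natCast_atTop_atTop.eventually_ge_atTop (1 / β)
  filter_upwards [h1, h2] with n hn1 hn2
  rw [one_mul, Real.norm_eq_abs, Real.norm_eq_abs, abs_of_pos (Real.exp_pos _),
    abs_of_pos (Real.exp_pos _), Real.exp_le_exp]
  have ha := abs_le.mp hn1
  have hb : 1 ≤ β * n := by
    rw [div_le_iff₀ hβ] at hn2
    linarith
  have h3 : (n : ℝ) ^ 2 ≤ (a - 2 * n) ^ 2 := by nlinarith [ha.1, ha.2]
  nlinarith [mul_le_mul_of_nonneg_left h3 hβ.le, Nat.cast_nonneg (α := ℝ) n]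

lemma summable_gauss_int {β : ℝ} (hβ : 0 < β) (c : ℝ) :
    Summable (fun m : ℤ => Real.exp (-β * (c - 2 * m) ^ 2)) := by
  apply Summable.of_nat_of_neg
  · exact (summable_gauss_nat hβ c).congr (fun n => by push_cast; ring_nf)
  · refine (summable_gauss_nat hβ (-c)).congr (fun n => ?_)
    push_cast
    congr 1
    ring

lemma kRad_integral_inner {β : ℝ} (hβ : 0 < β) (t : ℝ) :
    ∫ t' in Set.Icc (0:ℝ) 1, kRad β t t' = Real.sqrt (π / β) := by
  set f : ℝ → ℝ := fun u => Real.exp (-β * u ^ 2) with hf_def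
  have hf_cont : Continuous f := by
    apply Real.continuous_exp.comp
    continuity
  have hf_int : Integrable f := integrable_exp_neg_mul_sq hβ
  set F : ℤ → ℝ → ℝ := fun m t' =>
    Real.exp (-β * (t - t' - 2 * m) ^ 2) + Real.exp (-β * (t + t' - 2 * m) ^ 2) with hF_def
  have hpt : ∀ t' : ℝ, kRad β t t' = ∑' m : ℤ, F m t' := by
    intro t'
    exact (Summable.tsum_add (summable_gauss_int hβ (t - t')) (summable_gauss_int hβ (t + t'))).symm
  set S : ℤ → Set ℝ := fun m => Set.Ioc (t - 2 * m - 1) (t - 2 * m + 1) with hS_def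
  have hFcont : ∀ m : ℤ, Continuous (F m) := by
    intro m
    apply Continuous.add <;> exact Real.continuous_exp.comp (by continuity)
  have hF_int : ∀ m : ℤ, Integrable (F m) (volume.restrict (Set.Icc (0:ℝ) 1)) := by
    intro m
    exact (hFcont m).integrableOn_Icc
  have key : ∀ m : ℤ, (∫ t' in Set.Icc (0:ℝ) 1, F m t') = ∫ u in S m, f u := by
    intro m
    have harg1 : ∀ t' : ℝ, Real.exp (-β * (t - t' - 2 * m) ^ 2) = f (t - 2 * m - t') := by
      intro t'; simp only [hf_def]; congr 1; ring
    have harg2 : ∀ t' : ℝ, Real.exp (-β * (t + t' - 2 * m) ^ 2) = f (t - 2 * m + t') := by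
      intro t'; simp only [hf_def]; congr 1; ring
    have e1 : (∫ t' in (0:ℝ)..1, f (t - 2 * m - t')) = ∫ u in (t - 2*m - 1)..(t - 2*m), f u := by
      rw [intervalIntegral.integral_comp_sub_left f (t - 2 * m)]
      norm_num
    have e2 : (∫ t' in (0:ℝ)..1, f (t - 2 * m + t')) = ∫ u in (t - 2*m)..(t - 2*m + 1), f u := by
      rw [intervalIntegral.integral_comp_add_left f (t - 2 * m)]
      norm_num
    have i1 : IntervalIntegrable (fun t' : ℝ => f (t - 2 * m - t')) volume 0 1 :=
      (hf_cont.comp (by continuity)).intervalIntegrable _ _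
    have i2 : IntervalIntegrable (fun t' : ℝ => f (t - 2 * m + t')) volume 0 1 :=
      (hf_cont.comp (by continuity)).intervalIntegrable _ _
    calc (∫ t' in Set.Icc (0:ℝ) 1, F m t')
        = ∫ t' in (0:ℝ)..1, (f (t - 2 * m - t') + f (t - 2 * m + t')) := by
          rw [MeasureTheory.integral_Icc_eq_integral_Ioc,
            ← intervalIntegral.integral_of_le (by norm_num : (0:ℝ) ≤ 1)]
          apply intervalIntegral.integral_congr
          intro x _
          simp only [hF_def, harg1 x, harg2 x]
      _ = (∫ t' in (0:ℝ)..1, f (t - 2 * m - t')) + ∫ t' in (0:ℝ)..1, f (t - 2 * m + t') :=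
          intervalIntegral.integral_add i1 i2
      _ = (∫ u in (t - 2*m - 1)..(t - 2*m), f u) + ∫ u in (t - 2*m)..(t - 2*m + 1), f u := by
          rw [e1, e2]
      _ = ∫ u in (t - 2*m - 1)..(t - 2*m + 1), f u :=
          intervalIntegral.integral_add_adjacent_intervals
            (hf_cont.intervalIntegrable _ _) (hf_cont.intervalIntegrable _ _)
      _ = ∫ u in S m, f u := by
          rw [intervalIntegral.integral_of_le (by linarith : t - 2*m - 1 ≤ t - 2*m + 1)]
  have hmeas : ∀ m : ℤ, MeasurableSet (S m) := fun m => measurableSet_Ioc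
  have hdisj : Pairwise (Function.onFun Disjoint S) := by
    intro i j hij
    simp only [Function.onFun, hS_def]
    rw [Set.Ioc_disjoint_Ioc]
    rcases hij.lt_or_gt with h | h
    · have hij' : (i : ℝ) + 1 ≤ j := by exact_mod_cast Int.add_one_le_iff.mpr h
      refine le_trans (min_le_right _ _) (le_trans ?_ (le_max_left _ _))
      linarith
    · have hij' : (j : ℝ) + 1 ≤ i := by exact_mod_cast Int.add_one_le_iff.mpr h
      refine le_trans (min_le_left _ _) (le_trans ?_ (le_max_right _ _))
      linarith
  have hunion : (⋃ m, S m) = Set.univ := by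
    ext x
    simp only [Set.mem_iUnion, Set.mem_univ, iff_true, hS_def, Set.mem_Ioc]
    refine ⟨⌊(t - x + 1) / 2⌋, ?_, ?_⟩
    · have h := Int.sub_one_lt_floor ((t - x + 1) / 2)
      linarith
    · have h := Int.floor_le ((t - x + 1) / 2)
      linarith
  have hsum : HasSum (fun m : ℤ => ∫ u in S m, f u) (Real.sqrt (π / β)) := by
    have h := MeasureTheory.hasSum_integral_iUnion hmeas hdisj hf_int.integrableOn
    rw [hunion, MeasureTheory.Measure.restrict_univ] at h
    rwa [integral_gaussian β] at h
  have hF_sum : Summable fun m : ℤ => ∫ t' in Set.Icc (0:ℝ) 1, ‖F m t'‖ := by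
    refine hsum.summable.congr (fun m => ?_)
    rw [← key m]
    apply MeasureTheory.integral_congr_ae
    filter_upwards with x
    exact (Real.norm_of_nonneg (by positivity)).symm
  calc (∫ t' in Set.Icc (0:ℝ) 1, kRad β t t')
      = ∫ t' in Set.Icc (0:ℝ) 1, ∑' m : ℤ, F m t' := by
        apply MeasureTheory.integral_congr_ae
        filter_upwards with x
        exact hpt x
    _ = ∑' m : ℤ, ∫ t' in Set.Icc (0:ℝ) 1, F m t' :=
        (MeasureTheory.integral_tsum_of_summable_integral_norm hF_int hF_sum).symm
    _ = ∑' m : ℤ, ∫ u in S m, f u := tsum_congr key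
    _ = Real.sqrt (π / β) := hsum.tsum_eq

/-- The energy of the uniform distribution on `[0,1]` under the infinite-image Neumann radial
kernel equals the constant-mode coefficient `a_0 = √(π/β)`. -/
theorem kRad_uniform_energy (β : ℝ) (hβ : 0 < β) :
    ∫ t in Set.Icc (0 : ℝ) 1, ∫ t' in Set.Icc (0 : ℝ) 1, kRad β t t' = Real.sqrt (π / β) := by
  simp only [kRad_integral_inner hβ]
  rw [MeasureTheory.setIntegral_const]
  simp [Real.volume_Icc]
end
end
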